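/- Let G be an NFA with set of secret states Q^S ⊆ Q, with observer det(G) and desired observer det_d(G). Let ∼o be an opaque observation equivalence on G with quotient G̃ = G/∼o. Let H_ob be the quotient of det(G̃) by an opaque bisimulation ≈o and let H_b be the quotient of det(G̃) by a bisimulation ≈, and let H_obd be the accessible part of H_ob after deleting every secret class (classes whose members X̃ satisfy X̃ ⊆ Q̃^S). Let T be the largest TPO w.r.t. (det_d(G), det(G)) and let T′ be the largest TPO w.r.t. (H_obd, H_b). Then for every label sequence ω: T has a run labelled ω reaching some state q if and only if T′ has a run labelled ω reaching some state q̃. -/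
import Mathlib


set_option autoImplicit false

/-! ### Nondeterministic finite automata with unobservable event τ (label `none`) -/

structure NFAt (σ : Type*) (Q : Type*) where
  trans : Q → Option σ → Q → Prop
  init : Set Q

namespace NFAt

variable {σ : Type*} {Q : Type*}

/-- `G.obsReach x s y`: there is a path from `x` to `y` whose label sequence,
after erasing all τ's (`none` labels), equals `s`. -/
inductive obsReach (G : NFAt σ Q) : Q → List σ → Q → Prop
  | refl (x : Q) : obsReach G x [] x
  | tau {x y z : Q} {s : List σ} :
      G.trans x none y → obsReach G y s z → obsReach G x s z
  | obs {x y z : Q} {a : σ} {s : List σ} :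
      G.trans x (some a) y → obsReach G y s z → obsReach G x (a :: s) z

/-- unobservable reach of a set of states -/
def UR (G : NFAt σ Q) (B : Set Q) : Set Q := {y | ∃ x ∈ B, G.obsReach x [] y}

/-- one observer (subset-construction) step -/
def obsStep (G : NFAt σ Q) (X : Set Q) (a : σ) : Set Q :=
  {y | ∃ x ∈ X, ∃ z, G.trans x (some a) z ∧ G.obsReach z [] y}

/-- initial state of the observer `det(G)` -/
def detInit (G : NFAt σ Q) : Set Q := G.UR G.init

/-- reach in the observer `det(G)` from a given observer state -/
inductive detReach (G : NFAt σ Q) : Set Q → List σ → Set Q → Prop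
  | nil (X : Set Q) : detReach G X [] X
  | cons {X Y : Set Q} {a : σ} {s : List σ} :
      (G.obsStep X a).Nonempty → detReach G (G.obsStep X a) s Y →
      detReach G X (a :: s) Y

/-- `det(G) →^s X` -/
def detReach₀ (G : NFAt σ Q) (s : List σ) (X : Set Q) : Prop :=
  G.detReach G.detInit s X

/-- reach in the desired observer `det_d(G)` (observer states contained in the
secret set are deleted) -/
inductive detdReach (G : NFAt σ Q) (QS : Set Q) : Set Q → List σ → Set Q → Prop
  | nil {X : Set Q} : ¬ X ⊆ QS → detdReach G QS X [] X
  | cons {X Y : Set Q} {a : σ} {s : List σ} :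
      ¬ X ⊆ QS → (G.obsStep X a).Nonempty →
      detdReach G QS (G.obsStep X a) s Y → detdReach G QS X (a :: s) Y

/-- `det_d(G) →^s X` -/
def detdReach₀ (G : NFAt σ Q) (QS : Set Q) (s : List σ) (X : Set Q) : Prop :=
  G.detdReach QS G.detInit s X

/-- current-state opacity w.r.t. the set of secret states `QS` -/
def CSO (G : NFAt σ Q) (QS : Set Q) : Prop :=
  ∀ (s : List σ) (x0 x : Q), x0 ∈ G.init → G.obsReach x0 s x → x ∈ QS →
    ∃ y0 y, y0 ∈ G.init ∧ G.obsReach y0 s y ∧ y ∉ QS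

/-- language of `G` -/
def lang (G : NFAt σ Q) : Set (List σ) :=
  {s | ∃ x0 ∈ G.init, ∃ x, G.obsReach x0 s x}

end NFAt

/-! ### Opaque observation equivalence and quotient automata -/

/-- `r` is an opaque observation equivalence on `G` w.r.t. `QS`. -/
def OpaqueObsEquiv {σ Q : Type*} (G : NFAt σ Q) (QS : Set Q) (r : Q → Q → Prop) : Prop :=
  Equivalence r ∧
  (∀ x1 x2, r x1 x2 → ∀ (s : List σ) (y1 : Q), G.obsReach x1 s y1 →
    ∃ y2, G.obsReach x2 s y2 ∧ r y1 y2) ∧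
  (∀ x1 x2, r x1 x2 → (x1 ∈ QS ↔ x2 ∈ QS))

/-- quotient automaton `G/∼` -/
def quotNFA {σ Q : Type*} (G : NFAt σ Q) (r : Setoid Q) : NFAt σ (Quotient r) where
  trans c e c' := ∃ x y, c = Quotient.mk r x ∧ c' = Quotient.mk r y ∧ G.trans x e y
  init := {c | ∃ x ∈ G.init, c = Quotient.mk r x}

/-- quotient secret states -/
def quotSecret {Q : Type*} (r : Setoid Q) (QS : Set Q) : Set (Quotient r) :=
  {c | ∃ x ∈ QS, c = Quotient.mk r x}

/-! ### Deterministic automata (as transition structures), bisimilarity, quotients -/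

structure DA (σ : Type*) (S : Type*) where
  step : S → σ → S → Prop
  init : S

/-- paths in an arbitrary labelled transition structure -/
inductive Steps {S E : Type*} (step : S → E → S → Prop) : S → List E → S → Prop
  | nil (p : S) : Steps step p [] p
  | cons {p q r : S} {e : E} {s : List E} :
      step p e q → Steps step q s r → Steps step p (e :: s) r

/-- bisimilarity of two deterministic automata -/
def Bisimilar {σ S1 S2 : Type*} (A : DA σ S1) (B : DA σ S2) : Prop :=
  ∃ R : S1 → S2 → Prop, R A.init B.init ∧
    ∀ p q, R p q →
      (∀ a p', A.step p a p' → ∃ q', B.step q a q' ∧ R p' q') ∧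
      (∀ a q', B.step q a q' → ∃ p', A.step p a p' ∧ R p' q')

/-- the observer `det(G)` as a deterministic automaton -/
def observerDA {σ Q : Type*} (G : NFAt σ Q) : DA σ (Set Q) where
  step X a Y := Y = G.obsStep X a ∧ Y.Nonempty
  init := G.detInit

/-- the desired observer `det_d(G)` as a deterministic automaton -/
def desiredDA {σ Q : Type*} (G : NFAt σ Q) (QS : Set Q) : DA σ (Set Q) where
  step X a Y := Y = G.obsStep X a ∧ Y.Nonempty ∧ ¬ X ⊆ QS ∧ ¬ Y ⊆ QS
  init := G.detInit

/-- opaque bisimulation on a deterministic automaton with secrecy predicate `sec` -/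
def OpaqueBisimDA {σ S : Type*} (A : DA σ S) (sec : S → Prop) (r : S → S → Prop) : Prop :=
  Equivalence r ∧
  (∀ X1 X2, r X1 X2 → ∀ (s : List σ) (Y1 : S), Steps A.step X1 s Y1 →
    ∃ Y2, Steps A.step X2 s Y2 ∧ r Y1 Y2) ∧
  (∀ X1 X2, r X1 X2 → (sec X1 ↔ sec X2))

/-- plain bisimulation (equivalence) on a deterministic automaton -/
def BisimEquivDA {σ S : Type*} (A : DA σ S) (r : S → S → Prop) : Prop :=
  Equivalence r ∧
  (∀ X1 X2, r X1 X2 → ∀ (s : List σ) (Y1 : S), Steps A.step X1 s Y1 →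
    ∃ Y2, Steps A.step X2 s Y2 ∧ r Y1 Y2)

/-- quotient of a deterministic automaton by an equivalence -/
def quotDA {σ S : Type*} (A : DA σ S) (r : Setoid S) : DA σ (Quotient r) where
  step c a c' := ∃ X Y, c = Quotient.mk r X ∧ c' = Quotient.mk r Y ∧ A.step X a Y
  init := Quotient.mk r A.init

/-- secrecy predicate on equivalence classes -/
def quotSec {S : Type*} (r : Setoid S) (sec : S → Prop) : Quotient r → Prop :=
  fun c => ∃ X, c = Quotient.mk r X ∧ sec X

/-- delete the secret states from a deterministic automaton -/
def delSecret {σ S : Type*} (A : DA σ S) (sec : S → Prop) : DA σ S where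
  step X a Y := A.step X a Y ∧ ¬ sec X ∧ ¬ sec Y
  init := A.init

/-! ### Automata with alphabets and synchronous composition -/

structure LDA (σ : Type*) (S : Type*) where
  alph : Set σ
  step : S → σ → S → Prop
  init : S

namespace LDA

variable {σ S S1 S2 : Type*}

/-- synchronous composition of two deterministic automata with alphabets -/
def sync (A : LDA σ S1) (B : LDA σ S2) : LDA σ (S1 × S2) where
  alph := A.alph ∪ B.alph
  step p a q :=
    (a ∈ A.alph ∧ a ∈ B.alph ∧ A.step p.1 a q.1 ∧ B.step p.2 a q.2) ∨
    (a ∈ A.alph ∧ a ∉ B.alph ∧ A.step p.1 a q.1 ∧ q.2 = p.2) ∨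
    (a ∉ A.alph ∧ a ∈ B.alph ∧ B.step p.2 a q.2 ∧ q.1 = p.1)
  init := (A.init, B.init)

/-- reach from the initial state -/
def reach₀ (A : LDA σ S) (s : List σ) (p : S) : Prop :=
  Steps A.step A.init s p

end LDA

/-- the observer `det(G)` as an automaton with alphabet -/
def observerLDA {σ Q : Type*} (G : NFAt σ Q) (Al : Set σ) : LDA σ (Set Q) where
  alph := Al
  step X a Y := a ∈ Al ∧ Y = G.obsStep X a ∧ Y.Nonempty
  init := G.detInit

/-- the desired observer `det_d(G)` as an automaton with alphabet -/
def desiredLDA {σ Q : Type*} (G : NFAt σ Q) (Al : Set σ) (QS : Set Q) : LDA σ (Set Q) where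
  alph := Al
  step X a Y := a ∈ Al ∧ Y = G.obsStep X a ∧ Y.Nonempty ∧ ¬ X ⊆ QS ∧ ¬ Y ⊆ QS
  init := G.detInit

/-- synchronous composition of two NFAs with alphabets `A1`, `A2` -/
def syncNFA {σ Q1 Q2 : Type*} (G1 : NFAt σ Q1) (G2 : NFAt σ Q2) (A1 A2 : Set σ) :
    NFAt σ (Q1 × Q2) where
  trans p e q :=
    (∃ a, e = some a ∧ a ∈ A1 ∧ a ∈ A2 ∧ G1.trans p.1 e q.1 ∧ G2.trans p.2 e q.2) ∨
    ((e = none ∨ ∃ a, e = some a ∧ a ∈ A1 ∧ a ∉ A2) ∧ G1.trans p.1 e q.1 ∧ q.2 = p.2) ∨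
    ((e = none ∨ ∃ a, e = some a ∧ a ∈ A2 ∧ a ∉ A1) ∧ G2.trans p.2 e q.2 ∧ q.1 = p.1)
  init := {p | p.1 ∈ G1.init ∧ p.2 ∈ G2.init}

-- natural projection on strings, erasing events outside `A`
open Classical in
noncomputable def projL {σ : Type*} (A : Set σ) : List σ → List σ
  | [] => []
  | a :: s => if a ∈ A then a :: projL A s else projL A s

/-- n-ary synchronous composition of NFAs over the same state type -/
def syncNFAN {σ Q : Type*} {m : ℕ} (G : Fin m → NFAt σ Q) (A : Fin m → Set σ) :
    NFAt σ (Fin m → Q) where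
  trans x e y :=
    (e = none ∧ ∃ i, (G i).trans (x i) none (y i) ∧ ∀ j, j ≠ i → y j = x j) ∨
    (∃ a, e = some a ∧ (∃ i, a ∈ A i) ∧
      (∀ i, a ∈ A i → (G i).trans (x i) (some a) (y i)) ∧
      (∀ i, a ∉ A i → y i = x i))
  init := {x | ∀ i, x i ∈ (G i).init}

/-- n-ary synchronous composition of automata with alphabets -/
def syncLDAN {E : Type*} {m : ℕ} {S : Fin m → Type*} (A : ∀ i, LDA E (S i)) :
    LDA E (∀ i, S i) where
  alph := {e | ∃ i, e ∈ (A i).alph}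
  step x e y := (∃ i, e ∈ (A i).alph) ∧
    (∀ i, e ∈ (A i).alph → (A i).step (x i) e (y i)) ∧
    (∀ i, e ∉ (A i).alph → y i = x i)
  init := fun i => (A i).init

/-! ### Three-player observers (TPOs) -/

/-- labels of TPO transitions: an event of Σ, the empty insertion ε,
or an erasure `σ→ε` -/
inductive TPOLabel (σ : Type*)
  | ev : σ → TPOLabel σ
  | eps : TPOLabel σ
  | er : σ → TPOLabel σ

/-- states of a TPO: `Y`, `Z` (with event component) and `W`
(with action component: `Sum.inl e` = event `e`, `Sum.inr e` = erasure `e→ε`) -/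
inductive TPOState (σ : Type*) (Sd : Type*) (Sf : Type*)
  | Y : Sd → Sf → TPOState σ Sd Sf
  | Z : Sd → Sf → σ → TPOState σ Sd Sf
  | W : Sd → Sf → σ ⊕ σ → TPOState σ Sd Sf

namespace TPOState

variable {σ Sd Sf : Type*}

def isY : TPOState σ Sd Sf → Prop
  | .Y _ _ => True
  | _ => False

def isZ : TPOState σ Sd Sf → Prop
  | .Z _ _ _ => True
  | _ => False

def isW : TPOState σ Sd Sf → Prop
  | .W _ _ _ => True
  | _ => False

end TPOState

/-- the transition relation of the largest TPO w.r.t. a pair of deterministic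
transition structures `(Dd, Df)` (desired observer and observer) -/
inductive TPOTrans {σ Sd Sf : Type*} (Dd : Sd → σ → Sd → Prop) (Df : Sf → σ → Sf → Prop) :
    TPOState σ Sd Sf → TPOLabel σ → TPOState σ Sd Sf → Prop
  | yz {xd xf e xf'} : Df xf e xf' →
      TPOTrans Dd Df (.Y xd xf) (.ev e) (.Z xd xf e)
  | zz {xd xf e θ xd'} : Dd xd θ xd' →
      TPOTrans Dd Df (.Z xd xf e) (.ev θ) (.Z xd' xf e)
  | zw1 {xd xf e xd' xf'} : Dd xd e xd' → Df xf e xf' →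
      TPOTrans Dd Df (.Z xd xf e) .eps (.W xd xf (Sum.inl e))
  | zw2 {xd xf e xf'} : Df xf e xf' →
      TPOTrans Dd Df (.Z xd xf e) (.er e) (.W xd xf (Sum.inr e))
  | wy1 {xd xf e xd' xf'} : Dd xd e xd' → Df xf e xf' →
      TPOTrans Dd Df (.W xd xf (Sum.inl e)) (.ev e) (.Y xd' xf')
  | wy2 {xd xf e xf'} : Df xf e xf' →
      TPOTrans Dd Df (.W xd xf (Sum.inr e)) (.ev e) (.Y xd xf')

/-! ### Transformed automata of TPOs, tagged events, renaming -/

/-- tagged events of the transformed automaton of a TPO: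
`yz α` (untagged system event), `ins α e_o` (= α_{e_o}), `epsIns e_o` (= ε_{e_o}),
`erase e_o` (= (e_o→ε)_{e_o}), `wy α e_o` (= α_{e_o,w}), `wyEr α e_o` (= α_{e_o→ε,w}) -/
inductive TEv (σ : Type*)
  | yz : σ → TEv σ
  | ins : σ → σ → TEv σ
  | epsIns : σ → TEv σ
  | erase : σ → TEv σ
  | wy : σ → σ → TEv σ
  | wyEr : σ → σ → TEv σ

/-- the renaming ρ, mapping tagged events back to TPO labels -/
def TEv.rho {σ : Type*} : TEv σ → TPOLabel σ
  | .yz a => .ev a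
  | .ins a _ => .ev a
  | .epsIns _ => .eps
  | .erase e => .er e
  | .wy a _ => .ev a
  | .wyEr a _ => .ev a

/-- letterwise renaming of strings -/
def rhoStr {σ : Type*} (s : List (TEv σ)) : List (TPOLabel σ) := s.map TEv.rho

/-- transitions of the transformed automaton of the largest TPO w.r.t. `(Dd, Df)`,
with self-loops at `Y`-states for the events in `ext` (other components' private
events) -/
inductive TATrans {σ Sd Sf : Type*} (Dd : Sd → σ → Sd → Prop) (Df : Sf → σ → Sf → Prop)
    (ext : Set σ) : TPOState σ Sd Sf → TEv σ → TPOState σ Sd Sf → Prop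
  | yz {xd xf e q} : TPOTrans Dd Df (.Y xd xf) (.ev e) q →
      TATrans Dd Df ext (.Y xd xf) (.yz e) q
  | zz {xd xf e θ q} : TPOTrans Dd Df (.Z xd xf e) (.ev θ) q →
      TATrans Dd Df ext (.Z xd xf e) (.ins θ e) q
  | zw1 {xd xf e q} : TPOTrans Dd Df (.Z xd xf e) .eps q →
      TATrans Dd Df ext (.Z xd xf e) (.epsIns e) q
  | zw2 {xd xf e q} : TPOTrans Dd Df (.Z xd xf e) (.er e) q →
      TATrans Dd Df ext (.Z xd xf e) (.erase e) q
  | wy1 {xd xf e a q} : TPOTrans Dd Df (.W xd xf (Sum.inl e)) (.ev a) q →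
      TATrans Dd Df ext (.W xd xf (Sum.inl e)) (.wy a e) q
  | wy2 {xd xf e a q} : TPOTrans Dd Df (.W xd xf (Sum.inr e)) (.ev a) q →
      TATrans Dd Df ext (.W xd xf (Sum.inr e)) (.wyEr a e) q
  | loop {xd xf a} : a ∈ ext → TATrans Dd Df ext (.Y xd xf) (.yz a) (.Y xd xf)

/-- alphabet of the transformed automaton of a component with alphabet `A`,
where `B` is the union of the other components' alphabets -/
def transAlph {σ : Type*} (A B : Set σ) : Set (TEv σ) :=
  fun e => match e with
  | .yz a => a ∈ A ∨ a ∈ B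
  | .ins a eo => (a ∈ A ∧ eo ∈ A) ∨ (a ∈ A ∧ a ∈ B ∧ eo ∈ B ∧ eo ∉ A)
  | .epsIns eo => eo ∈ A
  | .erase eo => eo ∈ A
  | .wy a eo => (a ∈ A ∧ eo ∈ A) ∨ (a ∈ A ∧ a ∈ B ∧ eo ∈ B ∧ eo ∉ A)
  | .wyEr a eo => (a ∈ A ∧ eo ∈ A) ∨ (a ∈ A ∧ a ∈ B ∧ eo ∈ B ∧ eo ∉ A)

/-- the transformed automaton `G^T` of the largest TPO w.r.t. `(Dd, Df)`,
with initial components `d0`, `f0`, component alphabet `A` and other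
components' alphabet `B` (marked states are the `Y`-states) -/
def transLDA {σ Sd Sf : Type*} (Dd : Sd → σ → Sd → Prop) (Df : Sf → σ → Sf → Prop)
    (d0 : Sd) (f0 : Sf) (A B : Set σ) : LDA (TEv σ) (TPOState σ Sd Sf) where
  alph := transAlph A B
  step := TATrans Dd Df (B \ A)
  init := .Y d0 f0

/-- the uncontrollable events of a transformed automaton: those labelling
transitions out of `Y`-states and out of `W`-states -/
def uncontrollableEv {σ : Type*} : Set (TEv σ) :=
  {e | (∃ a, e = TEv.yz a) ∨ (∃ a eo, e = TEv.wy a eo) ∨ (∃ a eo, e = TEv.wyEr a eo)}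

/-! ### The edit constraint specification and the constrained TPO -/

/-- insertion-decision events over the alphabet `A` -/
def isInsEv {σ : Type*} (A : Set σ) : TEv σ → Prop
  | .ins a eo => a ∈ A ∧ eo ∈ A
  | .epsIns eo => eo ∈ A
  | _ => False

/-- erasure-decision events over the alphabet `A` -/
def isErEv {σ : Type*} (A : Set σ) : TEv σ → Prop
  | .erase eo => eo ∈ A
  | _ => False

/-- the specification automaton `K` of the edit constraint Φ forbidding `n+1`
consecutive erasures: states `x_0, …, x_{n+1}` (represented by `ℕ`), marked
states `x_0, …, x_n`, erasures count up, insertions reset, `x_{n+1}` is dead -/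
def specK {σ : Type*} (A : Set σ) (n : ℕ) : LDA (TEv σ) ℕ where
  alph := {e | isInsEv A e ∨ isErEv A e}
  step i e j := i ≤ n ∧ ((isErEv A e ∧ j = i + 1) ∨ (isInsEv A e ∧ j = 0))
  init := 0

/-- transitions of the largest TPO with the edit constraint Φ imposed: states
are TPO states paired with the number of consecutive erasures performed so far;
no `nB+1` consecutive erasure decisions may occur without an intervening
insertion decision -/
inductive CTrans {σ Sd Sf : Type*} (Dd : Sd → σ → Sd → Prop) (Df : Sf → σ → Sf → Prop)
    (nB : ℕ) : TPOState σ Sd Sf × ℕ → TPOLabel σ → TPOState σ Sd Sf × ℕ → Prop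
  | yz {xd xf e q k} : TPOTrans Dd Df (.Y xd xf) (.ev e) q →
      CTrans Dd Df nB (.Y xd xf, k) (.ev e) (q, k)
  | zz {xd xf e θ q k} : TPOTrans Dd Df (.Z xd xf e) (.ev θ) q →
      CTrans Dd Df nB (.Z xd xf e, k) (.ev θ) (q, 0)
  | zw1 {xd xf e q k} : TPOTrans Dd Df (.Z xd xf e) .eps q →
      CTrans Dd Df nB (.Z xd xf e, k) .eps (q, 0)
  | zw2 {xd xf e q k} : k < nB → TPOTrans Dd Df (.Z xd xf e) (.er e) q →
      CTrans Dd Df nB (.Z xd xf e, k) (.er e) (q, k + 1)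
  | wy {xd xf a e q k} : TPOTrans Dd Df (.W xd xf a) (.ev e) q →
      CTrans Dd Df nB (.W xd xf a, k) (.ev e) (q, k)

/-! ### Paths within a state set, supervisor synthesis and AES pruning -/

/-- paths that stay inside a set of states `X` -/
inductive PathIn {S E : Type*} (step : S → E → S → Prop) (X : Set S) : S → List E → S → Prop
  | nil {p} : p ∈ X → PathIn step X p [] p
  | cons {p q r e s} : p ∈ X → step p e q → PathIn step X q s r →
      PathIn step X p (e :: s) r

/-- `X` is controllable (closed under uncontrollable transitions) and
nonblocking (every state of `X` reaches a marked state within `X`) -/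
def GoodSup {S E : Type*} (step : S → E → S → Prop) (marked : Set S) (unc : Set E)
    (X : Set S) : Prop :=
  (∀ p ∈ X, ∃ s q, PathIn step X p s q ∧ q ∈ marked) ∧
  (∀ p ∈ X, ∀ e ∈ unc, ∀ q, step p e q → q ∈ X)

/-- the state set of the supremal controllable and nonblocking subautomaton -/
def supCNset {S E : Type*} (step : S → E → S → Prop) (marked : Set S) (unc : Set E) :
    Set S :=
  ⋃₀ {X | GoodSup step marked unc X}

/-- `X` survives the AES pruning process: every `Z`- or `W`-state of `X` has an
outgoing transition into `X`, and every `yz`-transition from a `Y`-state of `X`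
leads into `X` -/
def GoodAES {σ Sd Sf : Type*} (Dd : Sd → σ → Sd → Prop) (Df : Sf → σ → Sf → Prop) (nB : ℕ)
    (X : Set (TPOState σ Sd Sf × ℕ)) : Prop :=
  (∀ p ∈ X, (p.1.isZ ∨ p.1.isW) → ∃ l q, CTrans Dd Df nB p l q ∧ q ∈ X) ∧
  (∀ p ∈ X, p.1.isY → ∀ e q, CTrans Dd Df nB p (TPOLabel.ev e) q → q.1.isZ → q ∈ X)

/-- the state set of the All Edit Structure: the largest set surviving the
pruning process -/
def aesSet {σ Sd Sf : Type*} (Dd : Sd → σ → Sd → Prop) (Df : Sf → σ → Sf → Prop)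
    (nB : ℕ) : Set (TPOState σ Sd Sf × ℕ) :=
  ⋃₀ {X | GoodAES Dd Df nB X}

/-! ### Runs of the AES with edit projection and generated string -/

/-- `ARun Dd Df nB X p pe l q`: a run of the (constrained, pruned to `X`) TPO
from `p` to `q` whose edit projection is `pe` and whose generated string is `l` -/
inductive ARun {σ Sd Sf : Type*} (Dd : Sd → σ → Sd → Prop) (Df : Sf → σ → Sf → Prop)
    (nB : ℕ) (X : Set (TPOState σ Sd Sf × ℕ)) :
    TPOState σ Sd Sf × ℕ → List σ → List σ → TPOState σ Sd Sf × ℕ → Prop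
  | nil {p} : p ∈ X → ARun Dd Df nB X p [] [] p
  | yz {xd xf e k q pe l r} : (TPOState.Y xd xf, k) ∈ X →
      TPOTrans Dd Df (.Y xd xf) (.ev e) q →
      ARun Dd Df nB X (q, k) pe l r →
      ARun Dd Df nB X (TPOState.Y xd xf, k) (e :: pe) l r
  | zz {xd xf e θ k q pe l r} : (TPOState.Z xd xf e, k) ∈ X →
      TPOTrans Dd Df (.Z xd xf e) (.ev θ) q →
      ARun Dd Df nB X (q, 0) pe l r →
      ARun Dd Df nB X (TPOState.Z xd xf e, k) pe (θ :: l) r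
  | zw1 {xd xf e k q pe l r} : (TPOState.Z xd xf e, k) ∈ X →
      TPOTrans Dd Df (.Z xd xf e) .eps q →
      ARun Dd Df nB X (q, 0) pe l r →
      ARun Dd Df nB X (TPOState.Z xd xf e, k) pe l r
  | zw2 {xd xf e k q pe l r} : (TPOState.Z xd xf e, k) ∈ X → k < nB →
      TPOTrans Dd Df (.Z xd xf e) (.er e) q →
      ARun Dd Df nB X (q, k + 1) pe l r →
      ARun Dd Df nB X (TPOState.Z xd xf e, k) pe l r
  | wy1 {xd xf e k q pe l r} : (TPOState.W xd xf (Sum.inl e), k) ∈ X →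
      TPOTrans Dd Df (.W xd xf (Sum.inl e)) (.ev e) q →
      ARun Dd Df nB X (q, k) pe l r →
      ARun Dd Df nB X (TPOState.W xd xf (Sum.inl e), k) pe (e :: l) r
  | wy2 {xd xf e k q pe l r} : (TPOState.W xd xf (Sum.inr e), k) ∈ X →
      TPOTrans Dd Df (.W xd xf (Sum.inr e)) (.ev e) q →
      ARun Dd Df nB X (q, k) pe l r →
      ARun Dd Df nB X (TPOState.W xd xf (Sum.inr e), k) pe l r

/-- edit projection of a string of tagged events: the untagged system events -/
def peOfT {σ : Type*} : List (TEv σ) → List σ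
  | [] => []
  | TEv.yz a :: s => a :: peOfT s
  | _ :: s => peOfT s

/-- generated (edited) string of a string of tagged events: inserted events and
executed non-erased events -/
def lOfT {σ : Type*} : List (TEv σ) → List σ
  | [] => []
  | TEv.ins a _ :: s => a :: lOfT s
  | TEv.wy a _ :: s => a :: lOfT s
  | _ :: s => lOfT s

/-! ### Edit functions -/

/-- a deterministic edit function: for history `s` and next event `a` it inserts
`ins s a` and erases `a` iff `er s a` -/
structure EditFn (σ : Type*) where
  ins : List σ → σ → List σ
  er : List σ → σ → Bool

namespace EditFn

variable {σ : Type*}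

/-- output of the edit function on event `a` after history `s` -/
def out (f : EditFn σ) (s : List σ) (a : σ) : List σ :=
  f.ins s a ++ (if f.er s a then [] else [a])

def hatAux (f : EditFn σ) : List σ → List σ → List σ
  | _, [] => []
  | pre, a :: s => f.out pre a ++ f.hatAux (pre ++ [a]) s

/-- the string-based edit function `f̂` -/
def hat (f : EditFn σ) (s : List σ) : List σ := f.hatAux [] s

-- number of consecutive erasures after processing event `a` with history
-- `pre`, given `c` consecutive erasures so far
open Classical in
noncomputable def nextCount (f : EditFn σ) (pre : List σ) (a : σ) (c : ℕ) : ℕ :=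
  if f.er pre a then (if f.ins pre a = [] then c + 1 else 1) else 0

/-- along the string, the number of consecutive erasures never exceeds `nB` -/
noncomputable def okFrom (f : EditFn σ) (nB : ℕ) : List σ → ℕ → List σ → Prop
  | _, _, [] => True
  | pre, c, a :: s =>
      f.nextCount pre a c ≤ nB ∧ f.okFrom nB (pre ++ [a]) (f.nextCount pre a c) s

end EditFn

/-! ### Auxiliary lemmas for Statement 10 -/

section Statement10Aux

variable {σ Q : Type*}

lemma obsReach_trans (G : NFAt σ Q) {x y z : Q} {s t : List σ}
    (h1 : G.obsReach x s y) (h2 : G.obsReach y t z) : G.obsReach x (s ++ t) z := by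
  induction h1 with
  | refl => simpa using h2
  | tau ht _ ih => exact .tau ht (ih h2)
  | obs ht _ ih => exact .obs ht (ih h2)

lemma obsReach_decomp (G : NFAt σ Q) {x y : Q} {l : List σ} (h : G.obsReach x l y) :
    ∀ a s, l = a :: s →
      ∃ u v, G.obsReach x [] u ∧ G.trans u (some a) v ∧ G.obsReach v s y := by
  induction h with
  | refl => intro a s hl; cases hl
  | tau ht _ ih =>
      intro a s hl
      obtain ⟨u, v, h1, h2, h3⟩ := ih a s hl
      exact ⟨u, v, .tau ht h1, h2, h3⟩
  | obs ht hrest _ =>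
      intro a s hl
      cases hl
      exact ⟨_, _, .refl _, ht, hrest⟩

/-- a set of states closed under unobservable reach -/
def tauClosed (G : NFAt σ Q) (X : Set Q) : Prop :=
  ∀ x ∈ X, ∀ y, G.obsReach x [] y → y ∈ X

lemma tauClosed_detInit (G : NFAt σ Q) : tauClosed G G.detInit := by
  rintro x ⟨x0, hx0, hrx⟩ y hy
  exact ⟨x0, hx0, by simpa using obsReach_trans G hrx hy⟩

lemma tauClosed_obsStep (G : NFAt σ Q) (X : Set Q) (a : σ) :
    tauClosed G (G.obsStep X a) := by
  rintro x ⟨u, hu, z, ht, hrx⟩ y hy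
  exact ⟨u, hu, z, ht, by simpa using obsReach_trans G hrx hy⟩

/-- image of a set of states under the quotient map -/
def phiQ (rS : Setoid Q) (X : Set Q) : Set (Quotient rS) :=
  {c | ∃ x ∈ X, c = Quotient.mk rS x}

lemma phiQ_nonempty (rS : Setoid Q) {X : Set Q} :
    (phiQ rS X).Nonempty ↔ X.Nonempty := by
  constructor
  · rintro ⟨c, x, hx, rfl⟩; exact ⟨x, hx⟩
  · rintro ⟨x, hx⟩; exact ⟨_, x, hx, rfl⟩

lemma obsReach_lift (G : NFAt σ Q) (rS : Setoid Q) {x y : Q} {s : List σ}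
    (h : G.obsReach x s y) :
    (quotNFA G rS).obsReach (Quotient.mk rS x) s (Quotient.mk rS y) := by
  induction h with
  | refl => exact .refl _
  | tau ht _ ih => exact .tau ⟨_, _, rfl, rfl, ht⟩ ih
  | obs ht _ ih => exact .obs ⟨_, _, rfl, rfl, ht⟩ ih

lemma obsReach_pullback (G : NFAt σ Q) {QS : Set Q} (rS : Setoid Q)
    (hr : OpaqueObsEquiv G QS rS.r) {c d : Quotient rS} {s : List σ}
    (h : (quotNFA G rS).obsReach c s d) :
    ∀ x : Q, Quotient.mk rS x = c →
      ∃ y, G.obsReach x s y ∧ Quotient.mk rS y = d := by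
  induction h with
  | refl => exact fun x hx => ⟨x, .refl x, hx⟩
  | tau ht _ ih =>
      intro x hx
      obtain ⟨x', y', hc, hc1, htG⟩ := ht
      obtain ⟨z, hz, hzd⟩ := ih y' hc1.symm
      have hxz : G.obsReach x' _ z := .tau htG hz
      have hxx' : rS.r x x' := Quotient.exact (hx.trans hc)
      obtain ⟨z2, hz2, hzz2⟩ := hr.2.1 x' x (hr.1.symm hxx') _ z hxz
      exact ⟨z2, hz2, (Quotient.sound hzz2).symm.trans hzd⟩
  | obs ht _ ih =>
      intro x hx
      obtain ⟨x', y', hc, hc1, htG⟩ := ht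
      obtain ⟨z, hz, hzd⟩ := ih y' hc1.symm
      have hxz : G.obsReach x' _ z := .obs htG hz
      have hxx' : rS.r x x' := Quotient.exact (hx.trans hc)
      obtain ⟨z2, hz2, hzz2⟩ := hr.2.1 x' x (hr.1.symm hxx') _ z hxz
      exact ⟨z2, hz2, (Quotient.sound hzz2).symm.trans hzd⟩

lemma phiQ_detInit (G : NFAt σ Q) {QS : Set Q} (rS : Setoid Q)
    (hr : OpaqueObsEquiv G QS rS.r) :
    phiQ rS G.detInit = (quotNFA G rS).detInit := by
  ext c
  constructor
  · rintro ⟨y, ⟨x0, hx0, hry⟩, rfl⟩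
    exact ⟨Quotient.mk rS x0, ⟨x0, hx0, rfl⟩, obsReach_lift G rS hry⟩
  · rintro ⟨c0, ⟨x0, hx0, rfl⟩, hrc⟩
    obtain ⟨y, hy, hyd⟩ := obsReach_pullback G rS hr hrc x0 rfl
    exact ⟨y, ⟨x0, hx0, hy⟩, hyd.symm⟩

lemma phiQ_obsStep (G : NFAt σ Q) {QS : Set Q} (rS : Setoid Q)
    (hr : OpaqueObsEquiv G QS rS.r) {X : Set Q} (hX : tauClosed G X) (a : σ) :
    phiQ rS (G.obsStep X a) = (quotNFA G rS).obsStep (phiQ rS X) a := by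
  ext c
  constructor
  · rintro ⟨y, ⟨x, hx, z, ht, hrz⟩, rfl⟩
    exact ⟨Quotient.mk rS x, ⟨x, hx, rfl⟩, Quotient.mk rS z, ⟨x, z, rfl, rfl, ht⟩,
      obsReach_lift G rS hrz⟩
  · rintro ⟨c0, ⟨x, hx, rfl⟩, c1, ⟨x', z', hx', hc1, ht⟩, hrc⟩
    obtain ⟨w, hw, hwd⟩ := obsReach_pullback G rS hr hrc z' hc1.symm
    have hxa : G.obsReach x' [a] w := .obs ht hw
    obtain ⟨w2, hw2, hww2⟩ :=
      hr.2.1 x' x (hr.1.symm (Quotient.exact hx')) [a] w hxa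
    obtain ⟨u, v, h1, h2, h3⟩ := obsReach_decomp G hw2 a [] rfl
    exact ⟨w2, ⟨u, hX x hx u h1, v, h2, h3⟩,
      hwd.symm.trans (Quotient.sound hww2)⟩

lemma subset_secret_iff (G : NFAt σ Q) {QS : Set Q} (rS : Setoid Q)
    (hr : OpaqueObsEquiv G QS rS.r) (X : Set Q) :
    X ⊆ QS ↔ phiQ rS X ⊆ quotSecret rS QS := by
  constructor
  · rintro h c ⟨x, hx, rfl⟩; exact ⟨x, h hx, rfl⟩
  · intro h x hx
    obtain ⟨x', hx', he⟩ := h ⟨x, hx, rfl⟩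
    exact (hr.2.2 x x' (Quotient.exact he)).2 hx'

lemma quotSec_mk_iff {S : Type*} (r : Setoid S) (sec : S → Prop)
    (hinv : ∀ X1 X2, r.r X1 X2 → (sec X1 ↔ sec X2)) (X : S) :
    quotSec r sec (Quotient.mk r X) ↔ sec X := by
  constructor
  · rintro ⟨X', hX', hs⟩
    exact (hinv X X' (Quotient.exact hX')).2 hs
  · intro hs; exact ⟨X, rfl, hs⟩

/-- componentwise relation on TPO states -/
def TPORel {σ' Sd Sf Sd' Sf' : Type*} (Rd : Sd → Sd' → Prop) (Rf : Sf → Sf' → Prop) :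
    TPOState σ' Sd Sf → TPOState σ' Sd' Sf' → Prop
  | .Y xd xf, .Y cd cf => Rd xd cd ∧ Rf xf cf
  | .Z xd xf e, .Z cd cf e' => Rd xd cd ∧ Rf xf cf ∧ e = e'
  | .W xd xf b, .W cd cf b' => Rd xd cd ∧ Rf xf cf ∧ b = b'
  | _, _ => False

lemma TPOTrans_transfer {σ' Sd Sf Sd' Sf' : Type*}
    {D1d : Sd → σ' → Sd → Prop} {D1f : Sf → σ' → Sf → Prop}
    {D2d : Sd' → σ' → Sd' → Prop} {D2f : Sf' → σ' → Sf' → Prop}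
    {Rd : Sd → Sd' → Prop} {Rf : Sf → Sf' → Prop}
    (hd : ∀ x y, Rd x y → ∀ a x', D1d x a x' → ∃ y', D2d y a y' ∧ Rd x' y')
    (hf : ∀ x y, Rf x y → ∀ a x', D1f x a x' → ∃ y', D2f y a y' ∧ Rf x' y')
    {p q : _} {l : TPOLabel σ'} {p' : _}
    (hpq : TPORel Rd Rf p q) (h : TPOTrans D1d D1f p l p') :
    ∃ q', TPOTrans D2d D2f q l q' ∧ TPORel Rd Rf p' q' := by
  cases h with
  | @yz xd xf e xf' hstep =>
      cases q with
      | Y cd cf =>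
          obtain ⟨h1, h2⟩ := hpq
          obtain ⟨cf', hcf, -⟩ := hf _ _ h2 _ _ hstep
          exact ⟨.Z cd cf e, .yz hcf, ⟨h1, h2, rfl⟩⟩
      | Z _ _ _ => exact hpq.elim
      | W _ _ _ => exact hpq.elim
  | @zz xd xf e θ xd' hstep =>
      cases q with
      | Y _ _ => exact hpq.elim
      | Z cd cf e' =>
          obtain ⟨h1, h2, rfl⟩ := hpq
          obtain ⟨cd', hcd, h1'⟩ := hd _ _ h1 _ _ hstep
          exact ⟨.Z cd' cf e, .zz hcd, ⟨h1', h2, rfl⟩⟩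
      | W _ _ _ => exact hpq.elim
  | @zw1 xd xf e xd' xf' hsd hsf =>
      cases q with
      | Y _ _ => exact hpq.elim
      | Z cd cf e' =>
          obtain ⟨h1, h2, rfl⟩ := hpq
          obtain ⟨cd', hcd, -⟩ := hd _ _ h1 _ _ hsd
          obtain ⟨cf', hcf, -⟩ := hf _ _ h2 _ _ hsf
          exact ⟨.W cd cf (Sum.inl e), .zw1 hcd hcf, ⟨h1, h2, rfl⟩⟩
      | W _ _ _ => exact hpq.elim
  | @zw2 xd xf e xf' hsf =>
      cases q with
      | Y _ _ => exact hpq.elim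
      | Z cd cf e' =>
          obtain ⟨h1, h2, rfl⟩ := hpq
          obtain ⟨cf', hcf, -⟩ := hf _ _ h2 _ _ hsf
          exact ⟨.W cd cf (Sum.inr e), .zw2 hcf, ⟨h1, h2, rfl⟩⟩
      | W _ _ _ => exact hpq.elim
  | @wy1 xd xf e xd' xf' hsd hsf =>
      cases q with
      | Y _ _ => exact hpq.elim
      | Z _ _ _ => exact hpq.elim
      | W cd cf b =>
          obtain ⟨h1, h2, rfl⟩ := hpq
          obtain ⟨cd', hcd, h1'⟩ := hd _ _ h1 _ _ hsd
          obtain ⟨cf', hcf, h2'⟩ := hf _ _ h2 _ _ hsf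
          exact ⟨.Y cd' cf', .wy1 hcd hcf, ⟨h1', h2'⟩⟩
  | @wy2 xd xf e xf' hsf =>
      cases q with
      | Y _ _ => exact hpq.elim
      | Z _ _ _ => exact hpq.elim
      | W cd cf b =>
          obtain ⟨h1, h2, rfl⟩ := hpq
          obtain ⟨cf', hcf, h2'⟩ := hf _ _ h2 _ _ hsf
          exact ⟨.Y cd cf', .wy2 hcf, ⟨h1, h2'⟩⟩

lemma TPOSteps_transfer {σ' Sd Sf Sd' Sf' : Type*}
    {D1d : Sd → σ' → Sd → Prop} {D1f : Sf → σ' → Sf → Prop}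
    {D2d : Sd' → σ' → Sd' → Prop} {D2f : Sf' → σ' → Sf' → Prop}
    {Rd : Sd → Sd' → Prop} {Rf : Sf → Sf' → Prop}
    (hd : ∀ x y, Rd x y → ∀ a x', D1d x a x' → ∃ y', D2d y a y' ∧ Rd x' y')
    (hf : ∀ x y, Rf x y → ∀ a x', D1f x a x' → ∃ y', D2f y a y' ∧ Rf x' y')
    {p : _} {ω : List (TPOLabel σ')} {p' : _} {q : _}
    (h : Steps (TPOTrans D1d D1f) p ω p') (hpq : TPORel Rd Rf p q) :
    ∃ q', Steps (TPOTrans D2d D2f) q ω q' := by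
  induction h generalizing q with
  | nil _ => exact ⟨q, .nil q⟩
  | cons hstep _ ih =>
      obtain ⟨q1, hq1, hrel⟩ := TPOTrans_transfer hd hf hpq hstep
      obtain ⟨q', hq'⟩ := ih hrel
      exact ⟨q', .cons hq1 hq'⟩

end Statement10Aux
section Statement10Aux2

variable {σ Q : Type*}

lemma Rf_forward (G : NFAt σ Q) {QS : Set Q} (rS : Setoid Q)
    (hr : OpaqueObsEquiv G QS rS.r) (rb : Setoid (Set (Quotient rS)))
    {X : Set Q} {c : Quotient rb}
    (h : tauClosed G X ∧ c = Quotient.mk rb (phiQ rS X))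
    {a : σ} {Y : Set Q} (hs : (observerDA G).step X a Y) :
    ∃ c', (quotDA (observerDA (quotNFA G rS)) rb).step c a c' ∧
      (tauClosed G Y ∧ c' = Quotient.mk rb (phiQ rS Y)) := by
  obtain ⟨hcl, rfl⟩ := h
  obtain ⟨rfl, hne⟩ := hs
  exact ⟨Quotient.mk rb (phiQ rS (G.obsStep X a)),
    ⟨phiQ rS X, phiQ rS (G.obsStep X a), rfl, rfl,
      phiQ_obsStep G rS hr hcl a, (phiQ_nonempty rS).2 hne⟩,
    tauClosed_obsStep G X a, rfl⟩

lemma Rf_backward (G : NFAt σ Q) {QS : Set Q} (rS : Setoid Q)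
    (hr : OpaqueObsEquiv G QS rS.r) (rb : Setoid (Set (Quotient rS)))
    (hb : BisimEquivDA (observerDA (quotNFA G rS)) rb.r)
    {X : Set Q} {c : Quotient rb}
    (h : tauClosed G X ∧ c = Quotient.mk rb (phiQ rS X))
    {a : σ} {c' : Quotient rb}
    (hs : (quotDA (observerDA (quotNFA G rS)) rb).step c a c') :
    ∃ Y, (observerDA G).step X a Y ∧
      (tauClosed G Y ∧ c' = Quotient.mk rb (phiQ rS Y)) := by
  obtain ⟨hcl, rfl⟩ := h
  obtain ⟨Xt, Yt, hXt, rfl, hst⟩ := hs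
  have hrel : rb.r Xt (phiQ rS X) := rb.iseqv.symm (Quotient.exact hXt)
  obtain ⟨Y2, hY2, hYY2⟩ :=
    hb.2 Xt (phiQ rS X) hrel [a] Yt (Steps.cons hst (Steps.nil Yt))
  cases hY2 with
  | cons h1 h2 =>
    cases h2 with
    | nil =>
      obtain ⟨hEq, hne⟩ := h1
      rw [hEq, ← phiQ_obsStep G rS hr hcl a] at hne hYY2
      exact ⟨G.obsStep X a, ⟨rfl, (phiQ_nonempty rS).1 hne⟩,
        tauClosed_obsStep G X a, Quotient.sound hYY2⟩

lemma Rd_forward (G : NFAt σ Q) {QS : Set Q} (rS : Setoid Q)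
    (hr : OpaqueObsEquiv G QS rS.r) (rob : Setoid (Set (Quotient rS)))
    (hob : OpaqueBisimDA (observerDA (quotNFA G rS))
        (fun X => X ⊆ quotSecret rS QS) rob.r)
    {X : Set Q} {c : Quotient rob}
    (h : tauClosed G X ∧ c = Quotient.mk rob (phiQ rS X))
    {a : σ} {Y : Set Q} (hs : (desiredDA G QS).step X a Y) :
    ∃ c', (delSecret (quotDA (observerDA (quotNFA G rS)) rob)
        (quotSec rob (fun X => X ⊆ quotSecret rS QS))).step c a c' ∧
      (tauClosed G Y ∧ c' = Quotient.mk rob (phiQ rS Y)) := by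
  obtain ⟨hcl, rfl⟩ := h
  obtain ⟨rfl, hne, hX, hY⟩ := hs
  refine ⟨Quotient.mk rob (phiQ rS (G.obsStep X a)),
    ⟨⟨phiQ rS X, phiQ rS (G.obsStep X a), rfl, rfl,
      phiQ_obsStep G rS hr hcl a, (phiQ_nonempty rS).2 hne⟩, ?_, ?_⟩,
    tauClosed_obsStep G X a, rfl⟩
  · rw [quotSec_mk_iff rob _ hob.2.2]
    exact fun hc => hX ((subset_secret_iff G rS hr X).2 hc)
  · rw [quotSec_mk_iff rob _ hob.2.2]
    exact fun hc => hY ((subset_secret_iff G rS hr _).2 hc)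

lemma Rd_backward (G : NFAt σ Q) {QS : Set Q} (rS : Setoid Q)
    (hr : OpaqueObsEquiv G QS rS.r) (rob : Setoid (Set (Quotient rS)))
    (hob : OpaqueBisimDA (observerDA (quotNFA G rS))
        (fun X => X ⊆ quotSecret rS QS) rob.r)
    {X : Set Q} {c : Quotient rob}
    (h : tauClosed G X ∧ c = Quotient.mk rob (phiQ rS X))
    {a : σ} {c' : Quotient rob}
    (hs : (delSecret (quotDA (observerDA (quotNFA G rS)) rob)
        (quotSec rob (fun X => X ⊆ quotSecret rS QS))).step c a c') :
    ∃ Y, (desiredDA G QS).step X a Y ∧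
      (tauClosed G Y ∧ c' = Quotient.mk rob (phiQ rS Y)) := by
  obtain ⟨hcl, rfl⟩ := h
  obtain ⟨⟨Xt, Yt, hXt, rfl, hst⟩, hns1, hns2⟩ := hs
  have hrel : rob.r Xt (phiQ rS X) := rob.iseqv.symm (Quotient.exact hXt)
  obtain ⟨Y2, hY2, hYY2⟩ :=
    hob.2.1 Xt (phiQ rS X) hrel [a] Yt (Steps.cons hst (Steps.nil Yt))
  cases hY2 with
  | cons h1 h2 =>
    cases h2 with
    | nil =>
      obtain ⟨hEq, hne⟩ := h1
      rw [hEq, ← phiQ_obsStep G rS hr hcl a] at hne hYY2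
      refine ⟨G.obsStep X a, ⟨rfl, (phiQ_nonempty rS).1 hne, ?_, ?_⟩,
        tauClosed_obsStep G X a, Quotient.sound hYY2⟩
      · intro hXQS
        exact hns1 ⟨phiQ rS X, rfl, (subset_secret_iff G rS hr X).1 hXQS⟩
      · intro hYQS
        refine hns2 ⟨Yt, rfl, ?_⟩
        exact (hob.2.2 Yt _ hYY2).2 ((subset_secret_iff G rS hr _).1 hYQS)

end Statement10Aux2
/-- The largest TPO w.r.t. `(det_d(G), det(G))` and the
largest TPO w.r.t. `(H_obd, H_b)` obtained after abstraction by opaque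
observation equivalence, opaque bisimulation and bisimulation have the same
labelled runs. -/
theorem tpo_abstraction_same_runs {σ Q : Type*} (G : NFAt σ Q) (QS : Set Q)
    (rS : Setoid Q) (hr : OpaqueObsEquiv G QS rS.r)
    (rob : Setoid (Set (Quotient rS)))
    (hob : OpaqueBisimDA (observerDA (quotNFA G rS))
        (fun X => X ⊆ quotSecret rS QS) rob.r)
    (rb : Setoid (Set (Quotient rS)))
    (hb : BisimEquivDA (observerDA (quotNFA G rS)) rb.r) :
    let Hob := quotDA (observerDA (quotNFA G rS)) rob
    let Hobd := delSecret Hob (quotSec rob (fun X => X ⊆ quotSecret rS QS))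
    let Hb := quotDA (observerDA (quotNFA G rS)) rb
    ∀ ω : List (TPOLabel σ),
      (∃ q, Steps (TPOTrans (desiredDA G QS).step (observerDA G).step)
          (TPOState.Y G.detInit G.detInit) ω q) ↔
      (∃ q, Steps (TPOTrans Hobd.step Hb.step)
          (TPOState.Y Hobd.init Hb.init) ω q) := by
  intro Hob Hobd Hb ω
  have hinit : tauClosed G G.detInit ∧
      Quotient.mk rob (quotNFA G rS).detInit
        = Quotient.mk rob (phiQ rS G.detInit) ∧
      Quotient.mk rb (quotNFA G rS).detInit
        = Quotient.mk rb (phiQ rS G.detInit) := by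
    rw [phiQ_detInit G rS hr]
    exact ⟨tauClosed_detInit G, rfl, rfl⟩
  constructor
  · rintro ⟨q, hq⟩
    exact TPOSteps_transfer
      (D2d := Hobd.step) (D2f := Hb.step)
      (Rd := fun X c => tauClosed G X ∧ c = Quotient.mk rob (phiQ rS X))
      (Rf := fun X c => tauClosed G X ∧ c = Quotient.mk rb (phiQ rS X))
      (fun X c h a X' hs => Rd_forward G rS hr rob hob h hs)
      (fun X c h a X' hs => Rf_forward G rS hr rb h hs)
      hq ⟨⟨hinit.1, hinit.2.1⟩, ⟨hinit.1, hinit.2.2⟩⟩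
  · rintro ⟨q, hq⟩
    exact TPOSteps_transfer
      (D2d := (desiredDA G QS).step) (D2f := (observerDA G).step)
      (Rd := fun c X => tauClosed G X ∧ c = Quotient.mk rob (phiQ rS X))
      (Rf := fun c X => tauClosed G X ∧ c = Quotient.mk rb (phiQ rS X))
      (fun c X h a c' hs => Rd_backward G rS hr rob hob h hs)
      (fun c X h a c' hs => Rf_backward G rS hr rb hb h hs)
      hq ⟨⟨hinit.1, hinit.2.1⟩, ⟨hinit.1, hinit.2.2⟩⟩
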